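/- arXiv:1710.02389 — 3 statements merged into one kernel-verified Lean document; each statement's English description precedes it below -/
import Mathlib

section
/- Let Γ be a finite set, let g : Γ × Γ → ℝ satisfy: (i) g(k,ℓ) ≥ 0 for all k,ℓ ∈ Γ; (ii) g(k,k) = 0 for all k ∈ Γ; (iii) g(a,c) ≤ g(a,b) + g(b,c) for all a,b,c ∈ Γ. Let y : Γ → ℝ and let i, j ∈ Γ with i ≠ j be such that y(j) > y(i) + g(i,j). Then Σ_{k ∈ Γ, k ≠ j} (y(j) − y(k) + g(j,k))⁻ + (y(i) − y(j) + g(i,j))⁻ ≤ Σ_{k ∈ Γ, k ≠ i} (y(i) − y(k) + g(i,k))⁻, where x⁻ := max(−x, 0) denotes the negative part of a real number x. -/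
/-- Key comparison of penalization terms: if the switching costs are non-negative, vanish
on the diagonal and satisfy the triangle inequality, and if `y j > y i + g i j` for some
`i ≠ j`, then
`∑_{k ≠ j} (y j − y k + g j k)⁻ + (y i − y j + g i j)⁻ ≤ ∑_{k ≠ i} (y i − y k + g i k)⁻`,
where `x⁻ = max (−x) 0` is the negative part. -/
theorem penalization_sum_ineq {Γ : Type*} [Fintype Γ] [DecidableEq Γ] (g : Γ → Γ → ℝ)
    (hnonneg : ∀ k l : Γ, 0 ≤ g k l)
    (hdiag : ∀ k : Γ, g k k = 0)
    (htri : ∀ a b c : Γ, g a c ≤ g a b + g b c)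
    (y : Γ → ℝ) (i j : Γ) (hij : i ≠ j) (hy : y j > y i + g i j) :
    (∑ k ∈ Finset.univ.filter (fun k => k ≠ j), max (-(y j - y k + g j k)) 0)
      + max (-(y i - y j + g i j)) 0
    ≤ ∑ k ∈ Finset.univ.filter (fun k => k ≠ i), max (-(y i - y k + g i k)) 0 := by
  classical
  set S : Finset Γ := Finset.univ.filter (fun k => k ≠ i ∧ k ≠ j) with hS
  have hiS : i ∉ S := by simp [hS]
  have hjS : j ∉ S := by simp [hS]
  have hfj : Finset.univ.filter (fun k => k ≠ j) = insert i S := by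
    ext k
    simp only [Finset.mem_filter, Finset.mem_univ, true_and, Finset.mem_insert, hS]
    constructor
    · intro h
      by_cases hk : k = i
      · exact Or.inl hk
      · exact Or.inr ⟨hk, h⟩
    · rintro (rfl | ⟨_, h⟩)
      · exact hij
      · exact h
  have hfi : Finset.univ.filter (fun k => k ≠ i) = insert j S := by
    ext k
    simp only [Finset.mem_filter, Finset.mem_univ, true_and, Finset.mem_insert, hS]
    constructor
    · intro h
      by_cases hk : k = j
      · exact Or.inl hk
      · exact Or.inr ⟨h, hk⟩
    · rintro (rfl | ⟨h, _⟩)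
      · exact hij.symm
      · exact h
  rw [hfj, hfi, Finset.sum_insert hiS, Finset.sum_insert hjS]
  have h0 : max (-(y j - y i + g j i)) 0 = 0 := by
    have h1 := hnonneg i j
    have h2 := hnonneg j i
    have : -(y j - y i + g j i) ≤ 0 := by linarith
    exact max_eq_right this
  rw [h0, zero_add]
  have hsum : ∑ k ∈ S, max (-(y j - y k + g j k)) 0
      ≤ ∑ k ∈ S, max (-(y i - y k + g i k)) 0 := by
    apply Finset.sum_le_sum
    intro k _
    have ht := htri i j k
    have : -(y j - y k + g j k) ≤ -(y i - y k + g i k) := by linarith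
    exact max_le_max this le_rfl
  linarith
end

section
/- Let a < b be real numbers. For each n, let Kₙ : [a,b] → ℝ be a nondecreasing continuous function with Kₙ(a) = 0, and suppose Kₙ converges uniformly on [a,b] to a function K (which is then nondecreasing and continuous with K(a) = 0). Let hₙ : [a,b] → ℝ be continuous functions converging uniformly on [a,b] to a continuous function h. Then ∫_{(a,b]} hₙ dμ_{Kₙ} → ∫_{(a,b]} h dμ_K as n → ∞, where μ_F denotes the Lebesgue–Stieltjes measure associated with a nondecreasing continuous function F on [a,b]. -/
open MeasureTheory Filter Set

lemma partition_mono (t : ℕ → ℝ) (m : ℕ) (ht : ∀ i < m, t i ≤ t (i+1)) :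
    ∀ i j, i ≤ j → j ≤ m → t i ≤ t j := by
  intro i j hij hjm
  induction j with
  | zero => obtain rfl : i = 0 := by omega
            exact le_refl _
  | succ k ihk =>
    rcases Nat.eq_or_lt_of_le hij with rfl | hlt
    · exact le_refl _
    · exact le_trans (ihk (by omega) (by omega)) (ht k (by omega))

lemma partition_union (t : ℕ → ℝ) : ∀ m : ℕ, (∀ i < m, t i ≤ t (i+1)) →
    (⋃ i ∈ Finset.range m, Ioc (t i) (t (i+1))) = Ioc (t 0) (t m) := by
  intro m
  induction m with
  | zero => simp
  | succ m ih =>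
    intro ht
    rw [Finset.range_add_one, Finset.set_biUnion_insert,
      ih (fun i hi => ht i (by omega)), Set.union_comm,
      Ioc_union_Ioc_eq_Ioc (partition_mono t (m+1) ht 0 m (by omega) (by omega))
        (ht m (by omega))]

lemma step_estimate (ν : Measure ℝ) (t : ℕ → ℝ) (m : ℕ)
    (ht : ∀ i < m, t i ≤ t (i+1))
    (G : ℝ → ℝ)
    (hν : ∀ i < m, ν (Ioc (t i) (t (i+1))) = ENNReal.ofReal (G (t (i+1)) - G (t i)))
    (hG : ∀ i < m, G (t i) ≤ G (t (i+1)))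
    (f : ℝ → ℝ) (c : ℕ → ℝ) (ε : ℝ) (hε : 0 ≤ ε)
    (hf : ∀ i < m, ∀ x ∈ Ioc (t i) (t (i+1)), |f x - c i| ≤ ε)
    (hint : IntegrableOn f (Ioc (t 0) (t m)) ν) :
    |(∫ x in Ioc (t 0) (t m), f x ∂ν)
      - ∑ i ∈ Finset.range m, c i * (G (t (i+1)) - G (t i))|
      ≤ ε * (G (t m) - G (t 0)) := by
  have hsub : ∀ i < m, Ioc (t i) (t (i+1)) ⊆ Ioc (t 0) (t m) := fun i hi =>
    Set.Ioc_subset_Ioc (partition_mono t m ht 0 i (by omega) (by omega))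
      (partition_mono t m ht (i+1) m (by omega) le_rfl)
  have hintp : ∀ i < m, IntegrableOn f (Ioc (t i) (t (i+1))) ν :=
    fun i hi => hint.mono_set (hsub i hi)
  have hsplit : (∫ x in Ioc (t 0) (t m), f x ∂ν)
      = ∑ i ∈ Finset.range m, ∫ x in Ioc (t i) (t (i+1)), f x ∂ν := by
    rw [← partition_union t m ht]
    apply integral_biUnion_finset
    · intro i _; exact measurableSet_Ioc
    · intro i hi j hj hij
      simp only [Finset.coe_range, Set.mem_Iio] at hi hj
      simp only [Function.onFun]
      rcases lt_or_gt_of_ne hij with hlt | hlt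
      · exact Set.Ioc_disjoint_Ioc.mpr (le_trans (min_le_left _ _)
          (le_max_of_le_right (partition_mono t m ht (i+1) j (by omega) (by omega))))
      · exact Set.Ioc_disjoint_Ioc.mpr (le_trans (min_le_right _ _)
          (le_max_of_le_left (partition_mono t m ht (j+1) i (by omega) (by omega))))
    · intro i hi; exact hintp i (Finset.mem_range.mp hi)
  rw [hsplit, ← Finset.sum_sub_distrib]
  refine le_trans (Finset.abs_sum_le_sum_abs _ _) ?_
  have key : ∀ i ∈ Finset.range m,
      |(∫ x in Ioc (t i) (t (i+1)), f x ∂ν) - c i * (G (t (i+1)) - G (t i))|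
        ≤ ε * (G (t (i+1)) - G (t i)) := by
    intro i hi
    rw [Finset.mem_range] at hi
    have hνfin : ν (Ioc (t i) (t (i+1))) < ⊤ := by
      rw [hν i hi]; exact ENNReal.ofReal_lt_top
    have htr : (ν (Ioc (t i) (t (i+1)))).toReal = G (t (i+1)) - G (t i) := by
      rw [hν i hi, ENNReal.toReal_ofReal (by linarith [hG i hi])]
    have hconst : c i * (G (t (i+1)) - G (t i))
        = ∫ x in Ioc (t i) (t (i+1)), c i ∂ν := by
      rw [setIntegral_const, measureReal_def, htr, smul_eq_mul, mul_comm]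
    rw [hconst, ← integral_sub (hintp i hi) (integrableOn_const hνfin.ne)]
    calc |∫ x in Ioc (t i) (t (i+1)), (f x - c i) ∂ν|
        ≤ ε * (ν (Ioc (t i) (t (i+1)))).toReal := by
          rw [← Real.norm_eq_abs]
          apply norm_setIntegral_le_of_norm_le_const hνfin
          · intro x hx; rw [Real.norm_eq_abs]; exact hf i hi x hx
      _ = ε * (G (t (i+1)) - G (t i)) := by rw [htr]
  refine le_trans (Finset.sum_le_sum key) ?_
  rw [← Finset.mul_sum, Finset.sum_range_sub (fun i => G (t i))]

lemma integrableOn_of_cont (ν : Measure ℝ) (a b : ℝ) (f : ℝ → ℝ)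
    (hf : ContinuousOn f (Icc a b)) (hν : ν (Ioc a b) ≠ ⊤) :
    IntegrableOn f (Ioc a b) ν := by
  obtain ⟨M, hM⟩ := isCompact_Icc.exists_bound_of_continuousOn hf
  haveI : IsFiniteMeasure (ν.restrict (Ioc a b)) :=
    ⟨by rwa [Measure.restrict_apply_univ, lt_top_iff_ne_top]⟩
  refine ⟨(hf.mono Ioc_subset_Icc_self).aestronglyMeasurable measurableSet_Ioc, ?_⟩
  apply HasFiniteIntegral.of_bounded (C := M)
  exact (ae_restrict_iff' measurableSet_Ioc).mpr
    (ae_of_all _ fun x hx => hM x (Ioc_subset_Icc_self hx))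



/-- Weak convergence of Lebesgue–Stieltjes measures: if the nondecreasing continuous
functions `Kₙ` (with `Kₙ a = 0`) converge uniformly on `[a,b]` to `Klim`, and the
continuous functions `hₙ` converge uniformly on `[a,b]` to the continuous function
`hlim`, then `∫_{(a,b]} hₙ dμ_{Kₙ} → ∫_{(a,b]} hlim dμ_{Klim}`, where the
Lebesgue–Stieltjes measure `μ_F` of `F` is characterized by
`μ_F((s,u]) = F(u) − F(s)` for `a ≤ s ≤ u ≤ b`. -/
theorem stieltjes_integral_convergence
    (a b : ℝ) (hab : a < b)
    (K : ℕ → ℝ → ℝ) (Klim : ℝ → ℝ)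
    (hKmono : ∀ n, MonotoneOn (K n) (Set.Icc a b))
    (hKcont : ∀ n, ContinuousOn (K n) (Set.Icc a b))
    (hKa : ∀ n, K n a = 0)
    (hKunif : TendstoUniformlyOn K Klim atTop (Set.Icc a b))
    (h : ℕ → ℝ → ℝ) (hlim : ℝ → ℝ)
    (hhcont : ∀ n, ContinuousOn (h n) (Set.Icc a b))
    (hlimcont : ContinuousOn hlim (Set.Icc a b))
    (hhunif : TendstoUniformlyOn h hlim atTop (Set.Icc a b))
    (μ : ℕ → Measure ℝ) (μlim : Measure ℝ)
    (hμ : ∀ n, ∀ s u : ℝ, a ≤ s → s ≤ u → u ≤ b →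
      μ n (Set.Ioc s u) = ENNReal.ofReal (K n u - K n s))
    (hμlim : ∀ s u : ℝ, a ≤ s → s ≤ u → u ≤ b →
      μlim (Set.Ioc s u) = ENNReal.ofReal (Klim u - Klim s)) :
    Tendsto (fun n => ∫ x in Set.Ioc a b, h n x ∂(μ n)) atTop
      (nhds (∫ x in Set.Ioc a b, hlim x ∂μlim)) := by
  have hab' : a ≤ b := hab.le
  have haI : a ∈ Icc a b := ⟨le_refl a, hab'⟩
  have hbI : b ∈ Icc a b := ⟨hab', le_refl b⟩
  have hKpt : ∀ x ∈ Icc a b, Tendsto (fun n => K n x) atTop (nhds (Klim x)) :=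
    fun x hx => hKunif.tendsto_at hx
  have hKlimmono : ∀ s ∈ Icc a b, ∀ u ∈ Icc a b, s ≤ u → Klim s ≤ Klim u := by
    intro s hs u hu hsu
    exact le_of_tendsto_of_tendsto (hKpt s hs) (hKpt u hu)
      (Eventually.of_forall fun n => hKmono n hs hu hsu)
  obtain ⟨C, hCdef⟩ : ∃ C : ℝ, C = Klim b - Klim a + 1 := ⟨_, rfl⟩
  have hC1 : 1 ≤ C := by have := hKlimmono a haI b hbI hab'; rw [hCdef]; linarith
  have hCpos : 0 < C := by linarith
  rw [Metric.tendsto_atTop]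
  intro ε hε
  obtain ⟨ε0, hε0def⟩ : ∃ e : ℝ, e = ε / (8 * C) := ⟨_, rfl⟩
  have hε0 : 0 < ε0 := by rw [hε0def]; positivity
  have hε0C : ε0 * C = ε / 8 := by
    rw [hε0def]; field_simp
  -- uniform continuity of hlim
  obtain ⟨δ, hδ, hδ'⟩ := Metric.uniformContinuousOn_iff.mp
    (isCompact_Icc.uniformContinuousOn_of_continuous hlimcont) ε0 hε0
  -- partition
  obtain ⟨m, hm⟩ := exists_nat_gt ((b - a) / δ)
  have hm0 : 0 < m := by
    have h1 : (0:ℝ) < (b - a) / δ := div_pos (by linarith) hδ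
    exact_mod_cast Nat.cast_pos.mp (h1.trans hm)
  have hmR : (0:ℝ) < m := Nat.cast_pos.mpr hm0
  have hmne : (m:ℝ) ≠ 0 := ne_of_gt hmR
  have hmesh : (b - a) / m < δ := by
    rw [div_lt_iff₀ hδ] at hm
    rw [div_lt_iff₀ hmR]
    nlinarith
  have hdpos : 0 ≤ (b - a) / m := div_nonneg (by linarith) hmR.le
  obtain ⟨t, htdef⟩ : ∃ t : ℕ → ℝ, t = fun i : ℕ => a + (i:ℝ) * ((b - a) / m) := ⟨_, rfl⟩
  have ht0 : t 0 = a := by simp [htdef]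
  have htm : t m = b := by
    simp only [htdef]; field_simp; ring
  have htstep : ∀ i : ℕ, t (i+1) - t i = (b - a) / m := by
    intro i; simp only [htdef]; push_cast; ring
  have htle : ∀ i < m, t i ≤ t (i+1) := by
    intro i _; have := htstep i; linarith
  have htmem : ∀ i ≤ m, t i ∈ Icc a b := by
    intro i hi
    constructor
    · simp only [htdef]
      have : (0:ℝ) ≤ i * ((b - a) / m) := by positivity
      linarith
    · simp only [htdef]
      have h1 : (i:ℝ) * ((b - a) / m) ≤ (m:ℝ) * ((b - a) / m) :=
        mul_le_mul_of_nonneg_right (Nat.cast_le.mpr hi) hdpos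
      have h2 : (m:ℝ) * ((b - a) / m) = b - a := by field_simp
      linarith
  -- limit-side estimate
  obtain ⟨S, hSdef⟩ : ∃ S : ℝ,
      S = ∑ i ∈ Finset.range m, hlim (t (i+1)) * (Klim (t (i+1)) - Klim (t i)) := ⟨_, rfl⟩
  have hμlimfin : μlim (Ioc a b) ≠ ⊤ := by
    rw [hμlim a b le_rfl hab' le_rfl]; exact ENNReal.ofReal_ne_top
  have hμnfin : ∀ n, μ n (Ioc a b) ≠ ⊤ := by
    intro n; rw [hμ n a b le_rfl hab' le_rfl]; exact ENNReal.ofReal_ne_top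
  have hsubIcc : ∀ i < m, ∀ x ∈ Ioc (t i) (t (i+1)), x ∈ Icc a b := by
    intro i hi x hx
    have h1 := (htmem i (by omega)).1
    have h2 := (htmem (i+1) (by omega)).2
    exact ⟨le_trans h1 hx.1.le, le_trans hx.2 h2⟩
  have hclose : ∀ i < m, ∀ x ∈ Ioc (t i) (t (i+1)), |hlim x - hlim (t (i+1))| ≤ ε0 := by
    intro i hi x hx
    have hxI := hsubIcc i hi x hx
    have hd : dist x (t (i+1)) < δ := by
      rw [Real.dist_eq, abs_of_nonpos (by linarith [hx.2])]
      have := htstep i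
      have := hx.1
      linarith
    have := hδ' x hxI (t (i+1)) (htmem (i+1) (by omega)) hd
    rw [Real.dist_eq] at this
    exact this.le
  have Hlim : |(∫ x in Ioc a b, hlim x ∂μlim) - S| ≤ ε0 * (Klim b - Klim a) := by
    have hest := step_estimate μlim t m htle Klim
      (fun i hi => hμlim (t i) (t (i+1)) (htmem i (by omega)).1 (htle i hi)
        (htmem (i+1) (by omega)).2)
      (fun i hi => hKlimmono (t i) (htmem i (by omega)) (t (i+1)) (htmem (i+1) (by omega))
        (htle i hi))
      hlim (fun i => hlim (t (i+1))) ε0 hε0.le hclose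
      (by rw [ht0, htm]; exact integrableOn_of_cont μlim a b hlim hlimcont hμlimfin)
    rw [ht0, htm] at hest
    rw [hSdef]
    exact hest
  have hKlimnn : 0 ≤ Klim b - Klim a := by
    have := hKlimmono a haI b hbI hab'; linarith
  -- eventual properties
  have ev1 : ∀ᶠ n in atTop, ∀ x ∈ Icc a b, dist (hlim x) (h n x) < ε0 :=
    Metric.tendstoUniformlyOn_iff.mp hhunif ε0 hε0
  have ev2 : ∀ᶠ n in atTop, ∀ x ∈ Icc a b, dist (Klim x) (K n x) < 1/2 :=
    Metric.tendstoUniformlyOn_iff.mp hKunif (1/2) (by norm_num)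
  have hStendsto : Tendsto (fun n => ∑ i ∈ Finset.range m,
      hlim (t (i+1)) * (K n (t (i+1)) - K n (t i))) atTop (nhds S) := by
    rw [hSdef]
    apply tendsto_finset_sum
    intro i hi
    rw [Finset.mem_range] at hi
    exact (((hKpt (t (i+1)) (htmem (i+1) (by omega))).sub
      (hKpt (t i) (htmem i (by omega)))).const_mul _)
  have ev3 : ∀ᶠ n in atTop, |(∑ i ∈ Finset.range m,
      hlim (t (i+1)) * (K n (t (i+1)) - K n (t i))) - S| < ε / 2 := by
    have := hStendsto (Metric.ball_mem_nhds S (by positivity : (0:ℝ) < ε/2))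
    filter_upwards [this] with n hn
    simpa [Metric.mem_ball, Real.dist_eq] using hn
  have Hev : ∀ᶠ n in atTop,
      dist (∫ x in Ioc a b, h n x ∂(μ n)) (∫ x in Ioc a b, hlim x ∂μlim) < ε := by
    filter_upwards [ev1, ev2, ev3] with n h1 h2 h3
    obtain ⟨Sn, hSndef⟩ : ∃ Sn : ℝ,
        Sn = ∑ i ∈ Finset.range m, hlim (t (i+1)) * (K n (t (i+1)) - K n (t i)) := ⟨_, rfl⟩
    rw [← hSndef] at h3
    have hclose_n : ∀ i < m, ∀ x ∈ Ioc (t i) (t (i+1)),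
        |h n x - hlim (t (i+1))| ≤ 2 * ε0 := by
      intro i hi x hx
      have hxI := hsubIcc i hi x hx
      have hc1 := h1 x hxI
      rw [Real.dist_eq, abs_sub_comm] at hc1
      have hc2 := hclose i hi x hx
      calc |h n x - hlim (t (i+1))|
          ≤ |h n x - hlim x| + |hlim x - hlim (t (i+1))| := abs_sub_le _ _ _
        _ ≤ 2 * ε0 := by linarith
    have Hn : |(∫ x in Ioc a b, h n x ∂(μ n)) - Sn| ≤ 2 * ε0 * (K n b - K n a) := by
      have hest := step_estimate (μ n) t m htle (K n)
        (fun i hi => hμ n (t i) (t (i+1)) (htmem i (by omega)).1 (htle i hi)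
          (htmem (i+1) (by omega)).2)
        (fun i hi => hKmono n (htmem i (by omega)) (htmem (i+1) (by omega)) (htle i hi))
        (h n) (fun i => hlim (t (i+1))) (2 * ε0) (by linarith) hclose_n
        (by rw [ht0, htm]; exact integrableOn_of_cont (μ n) a b (h n) (hhcont n) (hμnfin n))
      rw [ht0, htm] at hest
      rw [hSndef]
      exact hest
    have hKnC : K n b - K n a ≤ C := by
      have ha2 := h2 a haI
      have hb2 := h2 b hbI
      rw [Real.dist_eq, abs_sub_lt_iff] at ha2 hb2
      rw [hCdef]
      linarith [ha2.1, ha2.2, hb2.1, hb2.2]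
    have hKnnn : 0 ≤ K n b - K n a := by
      have := hKmono n haI hbI hab'; linarith
    have b1 : |(∫ x in Ioc a b, h n x ∂(μ n)) - Sn| ≤ 2 * ε0 * C := by
      refine Hn.trans ?_
      have : 2 * ε0 * (K n b - K n a) ≤ 2 * ε0 * C :=
        mul_le_mul_of_nonneg_left hKnC (by linarith)
      linarith
    have b3 : |S - (∫ x in Ioc a b, hlim x ∂μlim)| ≤ ε0 * C := by
      rw [abs_sub_comm]
      refine Hlim.trans ?_
      have : Klim b - Klim a ≤ C := by rw [hCdef]; linarith
      nlinarith
    rw [Real.dist_eq]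
    calc |(∫ x in Ioc a b, h n x ∂(μ n)) - (∫ x in Ioc a b, hlim x ∂μlim)|
        ≤ |(∫ x in Ioc a b, h n x ∂(μ n)) - Sn| + |Sn - (∫ x in Ioc a b, hlim x ∂μlim)| :=
          abs_sub_le _ _ _
      _ ≤ |(∫ x in Ioc a b, h n x ∂(μ n)) - Sn| + (|Sn - S| + |S - (∫ x in Ioc a b, hlim x ∂μlim)|) := by
          linarith [abs_sub_le Sn S (∫ x in Ioc a b, hlim x ∂μlim)]
      _ ≤ 2 * ε0 * C + (ε / 2 + ε0 * C) := by linarith [h3, b1, b3]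
      _ < ε := by nlinarith [hε0C, hε]
  exact eventually_atTop.mp Hev
end

section
/- Let a < b be real numbers. For each n, let Kₙ : [a,b] → ℝ be a nondecreasing continuous function with Kₙ(a) = 0, converging uniformly on [a,b] to a function K. Let hₙ : [a,b] → ℝ be continuous functions converging uniformly on [a,b] to a continuous function h. Assume that ∫_{(a,b]} hₙ dμ_{Kₙ} ≤ 0 for every n and that h(s) ≥ 0 for every s ∈ [a,b]. Then ∫_{(a,b]} h dμ_K = 0, where μ_F denotes the Lebesgue–Stieltjes measure associated with a nondecreasing continuous function F on [a,b]. -/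
open MeasureTheory Filter Set ENNReal Topology

lemma my_integrableOn_Ioc {a b s u : ℝ} (f : ℝ → ℝ)
    (hf : ContinuousOn f (Set.Icc a b)) (ν : Measure ℝ) (hν : ν (Set.Ioc s u) < ∞)
    (hsub : Set.Ioc s u ⊆ Set.Icc a b) : IntegrableOn f (Set.Ioc s u) ν := by
  obtain ⟨M, hM⟩ := isCompact_Icc.exists_bound_of_continuousOn hf
  refine ⟨(hf.mono hsub).aestronglyMeasurable measurableSet_Ioc,
    HasFiniteIntegral.restrict_of_bounded (C := M) hν ?_⟩
  filter_upwards [ae_restrict_mem measurableSet_Ioc] with x hx using hM x (hsub hx)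

lemma my_approx_sum (m : ℕ) (t : ℕ → ℝ) (a b : ℝ)
    (ht0 : t 0 = a) (htm : t m = b)
    (hts : ∀ i, i < m → t i ≤ t (i + 1))
    (htmem : ∀ i, i ≤ m → t i ∈ Set.Icc a b)
    (f F : ℝ → ℝ) (hf : ContinuousOn f (Set.Icc a b))
    (hF : MonotoneOn F (Set.Icc a b))
    (ν : Measure ℝ)
    (hν : ∀ s u : ℝ, a ≤ s → s ≤ u → u ≤ b → ν (Set.Ioc s u) = ENNReal.ofReal (F u - F s))
    (ε : ℝ)
    (hε : ∀ i, i < m → ∀ x ∈ Set.Ioc (t i) (t (i + 1)), |f x - f (t (i + 1))| ≤ ε) :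
    |(∫ x in Set.Ioc a b, f x ∂ν) -
        ∑ i ∈ Finset.range m, f (t (i + 1)) * (F (t (i + 1)) - F (t i))|
      ≤ ε * (F b - F a) := by
  have hab : a ≤ b := (htmem 0 (Nat.zero_le m)).2.trans' (htmem 0 (Nat.zero_le m)).1
  have hfin : ∀ s u : ℝ, a ≤ s → s ≤ u → u ≤ b → ν (Set.Ioc s u) < ∞ := by
    intro s u h1 h2 h3
    rw [hν s u h1 h2 h3]; exact ENNReal.ofReal_lt_top
  have hint : ∀ i, i < m → IntegrableOn f (Set.Ioc (t i) (t (i + 1))) ν := by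
    intro i hi
    have h1 := (htmem i hi.le).1
    have h3 := (htmem (i + 1) hi).2
    exact my_integrableOn_Ioc f hf ν (hfin _ _ h1 (hts i hi) h3)
      (Set.Ioc_subset_Icc_self.trans (Set.Icc_subset_Icc h1 h3))
  have hii : ∀ i ∈ Finset.range m, IntervalIntegrable f ν (t i) (t (i + 1)) := by
    intro i hi
    rw [Finset.mem_range] at hi
    exact (intervalIntegrable_iff_integrableOn_Ioc_of_le (hts i hi)).2 (hint i hi)
  have hsplit : (∫ x in Set.Ioc a b, f x ∂ν)
      = ∑ i ∈ Finset.range m, ∫ x in (t i)..(t (i + 1)), f x ∂ν := by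
    rw [intervalIntegral.sum_integral_adjacent_intervals (fun i hi => hii i (Finset.mem_range.2 hi)),
      ht0, htm, intervalIntegral.integral_of_le hab]
  rw [hsplit, ← Finset.sum_sub_distrib]
  calc |∑ i ∈ Finset.range m, ((∫ x in (t i)..(t (i + 1)), f x ∂ν)
          - f (t (i + 1)) * (F (t (i + 1)) - F (t i)))|
      ≤ ∑ i ∈ Finset.range m, |(∫ x in (t i)..(t (i + 1)), f x ∂ν)
          - f (t (i + 1)) * (F (t (i + 1)) - F (t i))| := Finset.abs_sum_le_sum_abs _ _
    _ ≤ ∑ i ∈ Finset.range m, ε * (F (t (i + 1)) - F (t i)) := by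
        refine Finset.sum_le_sum fun i hi => ?_
        rw [Finset.mem_range] at hi
        have h1 := (htmem i hi.le).1
        have h3 := (htmem (i + 1) hi).2
        have hle := hts i hi
        have hΔ : 0 ≤ F (t (i + 1)) - F (t i) :=
          sub_nonneg.2 (hF (htmem i hi.le) (htmem (i + 1) hi) hle)
        have hmeas : (ν (Set.Ioc (t i) (t (i + 1)))).toReal = F (t (i + 1)) - F (t i) := by
          rw [hν _ _ h1 hle h3, ENNReal.toReal_ofReal hΔ]
        have hconst : IntegrableOn (fun _ : ℝ => f (t (i + 1))) (Set.Ioc (t i) (t (i + 1))) ν :=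
          integrableOn_const (hfin _ _ h1 hle h3).ne
        have hconsteq : (∫ _ in Set.Ioc (t i) (t (i + 1)), f (t (i + 1)) ∂ν)
            = f (t (i + 1)) * (ν (Set.Ioc (t i) (t (i + 1)))).toReal := by
          simp [setIntegral_const, mul_comm, Measure.real]
        rw [intervalIntegral.integral_of_le hle, ← hmeas, ← hconsteq,
          ← integral_sub (hint i hi) hconst]
        have := norm_setIntegral_le_of_norm_le_const (μ := ν) (s := Set.Ioc (t i) (t (i + 1)))
          (f := fun x => f x - f (t (i + 1))) (C := ε) (hfin _ _ h1 hle h3)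
          (fun x hx => by rw [Real.norm_eq_abs]; exact hε i hi x hx)
        rw [Real.norm_eq_abs] at this
        simpa [Measure.real, hmeas] using this
    _ = ε * (F b - F a) := by
        rw [← Finset.mul_sum, Finset.sum_range_sub (fun i => F (t i)), ht0, htm]


/-- The deterministic core of the Skorokhod flat-off condition in the limit: if the
nondecreasing continuous functions `Kₙ` (with `Kₙ a = 0`) converge uniformly on `[a,b]`
to `Klim`, the continuous functions `hₙ` converge uniformly on `[a,b]` to the continuous
`hlim`, `∫_{(a,b]} hₙ dμ_{Kₙ} ≤ 0` for every `n`, and `hlim ≥ 0` on `[a,b]`, then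
`∫_{(a,b]} hlim dμ_{Klim} = 0`, where the Lebesgue–Stieltjes measure `μ_F` of `F` is
characterized by `μ_F((s,u]) = F(u) − F(s)` for `a ≤ s ≤ u ≤ b`. -/
theorem stieltjes_integral_flat_off
    (a b : ℝ) (hab : a < b)
    (K : ℕ → ℝ → ℝ) (Klim : ℝ → ℝ)
    (hKmono : ∀ n, MonotoneOn (K n) (Set.Icc a b))
    (hKcont : ∀ n, ContinuousOn (K n) (Set.Icc a b))
    (hKa : ∀ n, K n a = 0)
    (hKunif : TendstoUniformlyOn K Klim atTop (Set.Icc a b))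
    (h : ℕ → ℝ → ℝ) (hlim : ℝ → ℝ)
    (hhcont : ∀ n, ContinuousOn (h n) (Set.Icc a b))
    (hlimcont : ContinuousOn hlim (Set.Icc a b))
    (hhunif : TendstoUniformlyOn h hlim atTop (Set.Icc a b))
    (μ : ℕ → Measure ℝ) (μlim : Measure ℝ)
    (hμ : ∀ n, ∀ s u : ℝ, a ≤ s → s ≤ u → u ≤ b →
      μ n (Set.Ioc s u) = ENNReal.ofReal (K n u - K n s))
    (hμlim : ∀ s u : ℝ, a ≤ s → s ≤ u → u ≤ b →
      μlim (Set.Ioc s u) = ENNReal.ofReal (Klim u - Klim s))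
    (hneg : ∀ n, (∫ x in Set.Ioc a b, h n x ∂(μ n)) ≤ 0)
    (hpos : ∀ s ∈ Set.Icc a b, 0 ≤ hlim s) :
    (∫ x in Set.Ioc a b, hlim x ∂μlim) = 0 := by
  have ha : a ∈ Set.Icc a b := ⟨le_rfl, hab.le⟩
  have hb : b ∈ Set.Icc a b := ⟨hab.le, le_rfl⟩
  -- monotonicity of the limit
  have hKlimmono : MonotoneOn Klim (Set.Icc a b) := fun x hx y hy hxy =>
    le_of_tendsto_of_tendsto (hKunif.tendsto_at hx) (hKunif.tendsto_at hy)
      (Eventually.of_forall fun n => hKmono n hx hy hxy)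
  set C := Klim b - Klim a with hCdef
  have hC0 : 0 ≤ C := sub_nonneg.2 (hKlimmono ha hb hab.le)
  set I := ∫ x in Set.Ioc a b, hlim x ∂μlim with hIdef
  have key : ∀ ε : ℝ, 0 < ε → I ≤ ε * (3 * C) := by
    intro ε hε
    -- uniform continuity of hlim
    have huc := isCompact_Icc.uniformContinuousOn_of_continuous hlimcont
    rw [Metric.uniformContinuousOn_iff] at huc
    obtain ⟨δ, hδ, hδ'⟩ := huc ε hε
    -- the partition
    obtain ⟨m, hm⟩ := exists_nat_gt ((b - a) / δ)
    have hm0 : 0 < (m : ℝ) := lt_of_le_of_lt (div_nonneg (by linarith) hδ.le) hm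
    obtain ⟨t, htdef⟩ : ∃ t : ℕ → ℝ, t = fun i : ℕ => a + (b - a) * (i : ℝ) / m := ⟨_, rfl⟩
    have ht0 : t 0 = a := by simp [htdef]
    have htm : t m = b := by simp only [htdef]; rw [mul_div_assoc, div_self hm0.ne', mul_one]; ring
    have htstep : ∀ i : ℕ, t (i + 1) - t i = (b - a) / m := by
      intro i
      simp only [htdef, Nat.cast_add, Nat.cast_one]
      field_simp
      ring
    have hts : ∀ i, i < m → t i ≤ t (i + 1) := by
      intro i _
      have h0 : 0 ≤ (b - a) / (m : ℝ) := div_nonneg (by linarith) hm0.le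
      linarith [htstep i]
    have htmono : ∀ i j : ℕ, i ≤ j → t i ≤ t j := by
      intro i j hij
      have h1 : (i : ℝ) ≤ (j : ℝ) := by exact_mod_cast hij
      have h2 : (0 : ℝ) ≤ b - a := by linarith
      have h3 : (b - a) * (i : ℝ) ≤ (b - a) * (j : ℝ) := mul_le_mul_of_nonneg_left h1 h2
      have h4 : (b - a) * (i : ℝ) / m ≤ (b - a) * (j : ℝ) / m :=
        div_le_div_of_nonneg_right h3 hm0.le
      simp only [htdef]
      linarith
    have htmem : ∀ i, i ≤ m → t i ∈ Set.Icc a b := by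
      intro i hi
      constructor
      · rw [← ht0]; exact htmono 0 i (Nat.zero_le i)
      · rw [← htm]; exact htmono i m hi
    have hmesh : (b - a) / m < δ := by
      rw [div_lt_iff₀ hm0]
      rw [div_lt_iff₀ hδ] at hm
      linarith
    have hosc : ∀ i, i < m → ∀ x ∈ Set.Ioc (t i) (t (i + 1)), |hlim x - hlim (t (i + 1))| ≤ ε := by
      intro i hi x hx
      obtain ⟨hx1, hx2⟩ := hx
      have hxmem : x ∈ Set.Icc a b :=
        ⟨(htmem i hi.le).1.trans hx1.le, hx2.trans (htmem (i + 1) hi).2⟩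
      have hdist : dist x (t (i + 1)) < δ := by
        have hst := htstep i
        rw [Real.dist_eq, abs_of_nonpos (by linarith)]
        linarith
      exact (le_of_lt (by simpa [Real.dist_eq] using hδ' x hxmem (t (i + 1)) (htmem (i + 1) hi) hdist))
    set S : (ℝ → ℝ) → ℝ :=
      fun F => ∑ i ∈ Finset.range m, hlim (t (i + 1)) * (F (t (i + 1)) - F (t i)) with hSdef
    -- approximation for the limit measure
    have h1 : |I - S Klim| ≤ ε * C :=
      my_approx_sum m t a b ht0 htm hts htmem hlim Klim hlimcont hKlimmono μlim hμlim ε hosc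
    -- approximation for the prelimit measures
    have h2 : ∀ n, |(∫ x in Set.Ioc a b, hlim x ∂(μ n)) - S (K n)| ≤ ε * (K n b - K n a) :=
      fun n => my_approx_sum m t a b ht0 htm hts htmem hlim (K n) hlimcont (hKmono n) (μ n)
        (hμ n) ε hosc
    -- eventually, S (K n) ≤ 2 ε (K n b - K n a)
    have hev : ∀ᶠ n in atTop, S (K n) ≤ 2 * ε * (K n b - K n a) := by
      rw [Metric.tendstoUniformlyOn_iff] at hhunif
      filter_upwards [hhunif ε hε] with n hn
      have hCn : 0 ≤ K n b - K n a := sub_nonneg.2 (hKmono n ha hb hab.le)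
      have hfinn : μ n (Set.Ioc a b) < ∞ := by
        rw [hμ n a b le_rfl hab.le le_rfl]; exact ENNReal.ofReal_lt_top
      have hmeasn : (μ n (Set.Ioc a b)).toReal = K n b - K n a := by
        rw [hμ n a b le_rfl hab.le le_rfl, ENNReal.toReal_ofReal hCn]
      have hinthlim : IntegrableOn hlim (Set.Ioc a b) (μ n) :=
        my_integrableOn_Ioc hlim hlimcont (μ n) hfinn Set.Ioc_subset_Icc_self
      have hinthn : IntegrableOn (h n) (Set.Ioc a b) (μ n) :=
        my_integrableOn_Ioc (h n) (hhcont n) (μ n) hfinn Set.Ioc_subset_Icc_self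
      have hbound : |(∫ x in Set.Ioc a b, hlim x ∂(μ n)) - ∫ x in Set.Ioc a b, h n x ∂(μ n)|
          ≤ ε * (K n b - K n a) := by
        rw [← integral_sub hinthlim hinthn]
        have := norm_setIntegral_le_of_norm_le_const (μ := μ n) (s := Set.Ioc a b)
          (f := fun x => hlim x - h n x) (C := ε) hfinn
          (fun x hx => by
            rw [Real.norm_eq_abs, ← Real.dist_eq]
            exact (hn x (Set.Ioc_subset_Icc_self hx)).le)
        rw [Real.norm_eq_abs] at this
        simpa [Measure.real, hmeasn] using this
      have := h2 n
      have hneg' := hneg n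
      rw [abs_le] at this hbound
      linarith [this.1, this.2, hbound.1, hbound.2]
    -- pass to the limit in the sums
    have h4 : Tendsto (fun n => S (K n)) atTop (𝓝 (S Klim)) := by
      apply tendsto_finset_sum
      intro i hi
      rw [Finset.mem_range] at hi
      exact tendsto_const_nhds.mul
        ((hKunif.tendsto_at (htmem (i + 1) hi)).sub (hKunif.tendsto_at (htmem i hi.le)))
    have h5 : Tendsto (fun n => 2 * ε * (K n b - K n a)) atTop (𝓝 (2 * ε * C)) :=
      tendsto_const_nhds.mul ((hKunif.tendsto_at hb).sub (hKunif.tendsto_at ha))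
    have h6 : S Klim ≤ 2 * ε * C := le_of_tendsto_of_tendsto h4 h5 hev
    rw [abs_le] at h1
    linarith [h1.1, h1.2]
  have hle : I ≤ 0 := by
    by_contra hI
    push_neg at hI
    have h6C : (0 : ℝ) < 6 * C + 6 := by linarith
    have := key (I / (6 * C + 6)) (div_pos hI h6C)
    rw [div_mul_eq_mul_div, le_div_iff₀ h6C] at this
    nlinarith [mul_nonneg hC0 hI.le]
  have hge : 0 ≤ I :=
    setIntegral_nonneg measurableSet_Ioc fun x hx => hpos x (Set.Ioc_subset_Icc_self hx)
  linarith
end
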